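/- arXiv:2005.08926 — 3 statements merged into one kernel-verified Lean document; each statement's English description precedes it below -/
import Mathlib

section
/- Let n ≥ 1 and let τ_0, …, τ_{n−1} > 0. Let T be the real (n+1) × (n+1) tridiagonal matrix with entries T_{0,0} = 2τ_0^{-1}, T_{n,n} = 2τ_{n−1}^{-1}, T_{i,i} = 2(τ_{i−1}^{-1} + τ_i^{-1}) for 0 < i < n, T_{i,i+1} = T_{i+1,i} = τ_i^{-1} for 0 ≤ i < n, and all other entries zero. Then T is invertible, and every D ∈ ℝ^{n+1} with T D = k satisfies ‖D‖_∞ ≤ (max_{0 ≤ i < n} τ_i) · ‖k‖_∞. -/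
/-!
The matrix is strictly diagonally dominant: in every row the diagonal entry is twice the sum of
the (nonnegative) off-diagonal entries, so the gap between them is that sum, which contains at
least one `τ_i⁻¹ ≥ (max τ)⁻¹`. Evaluating `T D` at a coordinate where `|D|` is maximal gives
Varah's bound `(max τ)⁻¹ ‖D‖_∞ ≤ ‖T D‖_∞`, and invertibility is the Levy–Desplanques theorem.
-/

open Finset

namespace Matrix

variable {K ι : Type*} [NormedField K] [Fintype ι] [DecidableEq ι]

theorem mul_norm_le_norm_mulVec_of_diag_gap (A : Matrix ι ι K) {c : ℝ}
    (hc : ∀ i, c ≤ ‖A i i‖ - ∑ j ∈ univ.erase i, ‖A i j‖) (x : ι → K) :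
    c * ‖x‖ ≤ ‖A *ᵥ x‖ := by
  cases isEmpty_or_nonempty ι
  · simp [Subsingleton.elim x 0]
  obtain ⟨i, hi : ‖x i‖ = ‖x‖⟩ := (IsGreatest.pi_norm x).1
  have hmax : ∀ j, ‖x j‖ ≤ ‖x i‖ := fun j => hi ▸ norm_le_pi_norm x j
  have hsplit : (A *ᵥ x) i = A i i * x i + ∑ j ∈ univ.erase i, A i j * x j :=
    (add_sum_erase _ _ (mem_univ i)).symm
  have hoff : ‖∑ j ∈ univ.erase i, A i j * x j‖ ≤ (∑ j ∈ univ.erase i, ‖A i j‖) * ‖x i‖ :=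
    calc ‖∑ j ∈ univ.erase i, A i j * x j‖
        ≤ ∑ j ∈ univ.erase i, ‖A i j‖ * ‖x j‖ := by
          simpa only [norm_mul] using norm_sum_le (univ.erase i) fun j => A i j * x j
      _ ≤ (∑ j ∈ univ.erase i, ‖A i j‖) * ‖x i‖ := by
          rw [sum_mul]
          exact sum_le_sum fun j _ => mul_le_mul_of_nonneg_left (hmax j) (norm_nonneg _)
  calc c * ‖x‖ = c * ‖x i‖ := by rw [hi]
    _ ≤ (‖A i i‖ - ∑ j ∈ univ.erase i, ‖A i j‖) * ‖x i‖ :=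
        mul_le_mul_of_nonneg_right (hc i) (norm_nonneg _)
    _ ≤ ‖A i i * x i‖ - ‖∑ j ∈ univ.erase i, A i j * x j‖ := by rw [norm_mul]; linarith
    _ ≤ ‖(A *ᵥ x) i‖ := hsplit ▸ norm_sub_le_norm_add _ _
    _ ≤ ‖A *ᵥ x‖ := norm_le_pi_norm _ i

theorem isUnit_of_diag_gap (A : Matrix ι ι K) {c : ℝ} (hc0 : 0 < c)
    (hc : ∀ i, c ≤ ‖A i i‖ - ∑ j ∈ univ.erase i, ‖A i j‖) : IsUnit A :=
  (isUnit_iff_isUnit_det A).2 <| isUnit_iff_ne_zero.2 <|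
    det_ne_zero_of_sum_row_lt_diag fun i => by linarith [hc i]

end Matrix

noncomputable section

namespace Spline

def matrix (n : ℕ) (τ : ℕ → ℝ) : Matrix (Fin (n + 1)) (Fin (n + 1)) ℝ := fun i j =>
  if (i : ℕ) = (j : ℕ) then
    (if (i : ℕ) = 0 then 2 * (τ 0)⁻¹
     else if (i : ℕ) = n then 2 * (τ (n - 1))⁻¹
     else 2 * ((τ ((i : ℕ) - 1))⁻¹ + (τ (i : ℕ))⁻¹))
  else if (i : ℕ) + 1 = (j : ℕ) then (τ (i : ℕ))⁻¹
  else if (j : ℕ) + 1 = (i : ℕ) then (τ (j : ℕ))⁻¹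
  else 0

def rowWeight (n : ℕ) (τ : ℕ → ℝ) (i : ℕ) : ℝ :=
  (if 0 < i then (τ (i - 1))⁻¹ else 0) + (if i < n then (τ i)⁻¹ else 0)

variable {n : ℕ} {τ : ℕ → ℝ}

theorem matrix_of_ne {i j : Fin (n + 1)} (hij : i ≠ j) :
    matrix n τ i j =
      (if (i : ℕ) + 1 = j then (τ i)⁻¹ else 0) + (if (j : ℕ) + 1 = i then (τ j)⁻¹ else 0) := by
  have : (i : ℕ) ≠ j := Fin.val_ne_of_ne hij
  unfold matrix
  split_ifs <;> first | omega | simp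

theorem matrix_nonneg_of_ne (hτ : ∀ i < n, 0 < τ i) {i j : Fin (n + 1)} (hij : i ≠ j) :
    0 ≤ matrix n τ i j := by
  rw [matrix_of_ne hij]
  refine add_nonneg ?_ ?_ <;> split_ifs <;> first | rfl | exact (inv_pos.2 (hτ _ (by omega))).le

theorem sum_erase_matrix (i : Fin (n + 1)) :
    ∑ j ∈ univ.erase i, matrix n τ i j = rowWeight n τ i := by
  rw [sum_congr rfl fun j hj => matrix_of_ne (ne_of_mem_erase hj).symm, sum_erase _ (by simp),
    sum_add_distrib, Fin.sum_univ_eq_sum_range (fun j => if (i : ℕ) + 1 = j then (τ i)⁻¹ else 0),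
    Fin.sum_univ_eq_sum_range (fun j => if j + 1 = (i : ℕ) then (τ j)⁻¹ else 0), sum_ite_eq]
  obtain ⟨_ | m, hi⟩ := i
  · simp [rowWeight]
  · simp [rowWeight, show m < n + 1 by omega, add_comm (τ m)⁻¹]

theorem matrix_diag (hn : n ≠ 0) (i : Fin (n + 1)) : matrix n τ i i = 2 * rowWeight n τ i := by
  have := i.isLt
  unfold matrix rowWeight
  split_ifs <;> first | omega | simp_all

theorem sup'_range_pos (hne : (range n).Nonempty) (hτ : ∀ i < n, 0 < τ i) :
    0 < (range n).sup' hne τ :=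
  let ⟨j, hj⟩ := hne
  (hτ j (mem_range.1 hj)).trans_le (le_sup' τ hj)

theorem inv_sup'_le_rowWeight (hne : (range n).Nonempty) (hτ : ∀ i < n, 0 < τ i) (i : ℕ)
    (hi : i ≤ n) : ((range n).sup' hne τ)⁻¹ ≤ rowWeight n τ i := by
  have hM : ∀ j < n, ((range n).sup' hne τ)⁻¹ ≤ (τ j)⁻¹ := fun j hj =>
    inv_anti₀ (hτ j hj) (le_sup' τ (mem_range.2 hj))
  have hn : n ≠ 0 := nonempty_range_iff.1 hne
  unfold rowWeight
  rcases hi.lt_or_eq with hi | rfl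
  · have : 0 ≤ if 0 < i then (τ (i - 1))⁻¹ else 0 := by
      split_ifs <;> first | rfl | exact (inv_pos.2 (hτ _ (by omega))).le
    simpa [hi] using add_le_add this (hM i hi)
  · simpa [Nat.pos_of_ne_zero hn] using hM (i - 1) (by omega)

theorem inv_sup'_le_diag_gap (hne : (range n).Nonempty) (hτ : ∀ i < n, 0 < τ i)
    (i : Fin (n + 1)) :
    ((range n).sup' hne τ)⁻¹ ≤ ‖matrix n τ i i‖ - ∑ j ∈ univ.erase i, ‖matrix n τ i j‖ := by
  have hw := inv_sup'_le_rowWeight hne hτ i (Nat.le_of_lt_succ i.isLt)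
  have hM := inv_pos.2 (sup'_range_pos hne hτ)
  rw [sum_congr rfl fun j hj => Real.norm_of_nonneg
      (matrix_nonneg_of_ne hτ (ne_of_mem_erase hj).symm),
    sum_erase_matrix, matrix_diag (nonempty_range_iff.1 hne), Real.norm_of_nonneg (by linarith)]
  linarith

end Spline

end

/-- The tridiagonal matrix of the natural cubic spline system, built from the
knot spacings `τ_0, …, τ_{n-1} > 0`, is invertible, and any solution `D` of
`T D = k` satisfies `‖D‖_∞ ≤ (max_i τ_i) ‖k‖_∞`.
(Here `Fin (n+1) → ℝ` carries the sup norm.) -/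
theorem stmt_4 (n : ℕ) (hn : 1 ≤ n) (τ : ℕ → ℝ) (hτ : ∀ i < n, 0 < τ i)
    (T : Matrix (Fin (n + 1)) (Fin (n + 1)) ℝ)
    (hT : ∀ i j : Fin (n + 1), T i j =
      if (i : ℕ) = (j : ℕ) then
        (if (i : ℕ) = 0 then 2 * (τ 0)⁻¹
         else if (i : ℕ) = n then 2 * (τ (n - 1))⁻¹
         else 2 * ((τ ((i : ℕ) - 1))⁻¹ + (τ (i : ℕ))⁻¹))
      else if (i : ℕ) + 1 = (j : ℕ) then (τ (i : ℕ))⁻¹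
      else if (j : ℕ) + 1 = (i : ℕ) then (τ (j : ℕ))⁻¹
      else 0) :
    IsUnit T ∧
    (∀ D k : Fin (n + 1) → ℝ, T.mulVec D = k →
      ‖D‖ ≤ ((Finset.range n).sup' ⟨0, Finset.mem_range.mpr hn⟩ τ) * ‖k‖) := by
  obtain rfl : T = Spline.matrix n τ := Matrix.ext hT
  have hne : (range n).Nonempty := ⟨0, mem_range.2 hn⟩
  have hgap := Spline.inv_sup'_le_diag_gap hne hτ
  have hM := Spline.sup'_range_pos hne hτ
  refine ⟨Matrix.isUnit_of_diag_gap _ (inv_pos.2 hM) hgap, fun D k hDk => ?_⟩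
  have hvarah := Matrix.mul_norm_le_norm_mulVec_of_diag_gap _ hgap D
  rwa [hDk, inv_mul_le_iff₀ hM] at hvarah
end

section
/- Let τ < T be real numbers. There is no function F : ℝ × ℝ × ℝ → ℝ such that for every differentiable function f : ℝ → ℝ and every t ∈ [τ, T], the derivative satisfies f'(t) = F(f(t), f(τ), t). -/
open Set

/-- There is no function `F` such that the derivative of every differentiable
`f : ℝ → ℝ` on `[τ, T]` is determined by the current value `f t`, the initial
value `f τ`, and the time `t` via `f'(t) = F (f t, f τ, t)`. -/
theorem stmt_10 (τ T : ℝ) (hτT : τ < T) :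
    ¬ ∃ F : ℝ × ℝ × ℝ → ℝ,
      ∀ f : ℝ → ℝ, Differentiable ℝ f →
        ∀ t ∈ Set.Icc τ T, deriv f t = F (f t, f τ, t) := by
  rintro ⟨F, hF⟩
  have hτ : τ ∈ Icc τ T := left_mem_Icc.2 hτT.le
  have hzero := hF (fun _ => 0) (differentiable_const 0) τ hτ
  have hshift := hF (· - τ) (differentiable_id.sub_const τ) τ hτ
  simp only [deriv_const, sub_self, deriv_sub_const, deriv_id''] at hzero hshift
  exact one_ne_zero (hshift.trans hzero.symm)
end

section
/- Let τ < T be real numbers, let v, w ∈ ℕ with v + 1 < w, and set u = w − v − 1. Let h : ℝ^u × ℝ^{v+1} → ℝ^u be continuous, write π : ℝ^w → ℝ^u for the projection onto the first u coordinates and σ : ℝ^w → ℝ^{v+1} for the projection onto the last v + 1 coordinates, and define f : ℝ^w → ℝ^{w × (v+1)} by: for 1 ≤ i ≤ u, f(z)_{i,j} = 0 for j ≤ v and f(z)_{i, v+1} = h(π(z), σ(z))_i; and for 1 ≤ j ≤ v + 1, f(z)_{u+j, j} = 1 with all remaining entries 0. Let X : ℝ → ℝ^{v+1} be continuously differentiable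 on [τ, T] with last coordinate X_{v+1}(t) = t for all t ∈ [τ, T]. Suppose z : ℝ → ℝ^w is differentiable on [τ, T] with σ(z(τ)) = X(τ) and z'(t) = f(z(t)) X'(t) (matrix–vector product) for all t ∈ [τ, T]. Then σ(z(t)) = X(t) for all t ∈ [τ, T], and y = π ∘ z satisfies y'(t) = h(y(t), X(t)) for all t ∈ [τ, T] with y(τ) = π(z(τ)). -/
open Set

/-! The last `v + 1` rows of the vector field form an identity block, so `σ ∘ z` has the same
derivative `X'` as the control and, starting from the same value, coincides with it. Since
`X_{v+1}(t) = t` on an interval of positive length, `X'_{v+1} = 1` there, and the first `u` rows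
then give `(π ∘ z)' = h(π z, σ z) X'_{v+1} = h(π z, X)`. -/

section Calculus

variable {E : Type*} [NormedAddCommGroup E] [NormedSpace ℝ E] {a b : ℝ}

theorem eqOn_Icc_of_hasDerivAt_eq {f g f' : ℝ → E}
    (hf : ∀ t ∈ Icc a b, HasDerivAt f (f' t) t) (hg : ∀ t ∈ Icc a b, HasDerivAt g (f' t) t)
    (ha : f a = g a) : EqOn f g (Icc a b) :=
  eq_of_has_deriv_right_eq (fun t ht => (hf t (Ico_subset_Icc_self ht)).hasDerivWithinAt)
    (fun t ht => (hg t (Ico_subset_Icc_self ht)).hasDerivWithinAt)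
    (fun t ht => (hf t ht).continuousAt.continuousWithinAt)
    (fun t ht => (hg t ht).continuousAt.continuousWithinAt) ha

theorem HasDerivAt.eq_of_eqOn_Icc {f g : ℝ → E} {f' g' : E} {t : ℝ} (hab : a < b)
    (ht : t ∈ Icc a b) (hf : HasDerivAt f f' t) (hg : HasDerivAt g g' t)
    (hfg : EqOn f g (Icc a b)) : f' = g' :=
  (uniqueDiffOn_Icc hab t ht).eq_deriv _ hf.hasDerivWithinAt
    (hg.hasDerivWithinAt.congr hfg (hfg ht))

end Calculus

section AugmentedField

variable {v w u : ℕ}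

-- `statePart` and `controlPart` are the projections `π` and `σ`.
def statePart (hw : u + (v + 1) = w) (z : Fin w → ℝ) : Fin u → ℝ :=
  fun a => z (Fin.castLE (hw ▸ Nat.le_add_right u (v + 1)) a)

def controlPart (hw : u + (v + 1) = w) (z : Fin w → ℝ) : Fin (v + 1) → ℝ :=
  fun b => z (Fin.cast hw (Fin.natAdd u b))

def augmentedField (hw : u + (v + 1) = w) (h : (Fin u → ℝ) → (Fin (v + 1) → ℝ) → (Fin u → ℝ))
    (z : Fin w → ℝ) : Matrix (Fin w) (Fin (v + 1)) ℝ :=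
  fun i j =>
    if hi : (i : ℕ) < u then
      (if (j : ℕ) = v then h (statePart hw z) (controlPart hw z) ⟨i.1, hi⟩ else 0)
    else (if (i : ℕ) = u + (j : ℕ) then 1 else 0)

variable (hw : u + (v + 1) = w) (h : (Fin u → ℝ) → (Fin (v + 1) → ℝ) → (Fin u → ℝ))
  (z : Fin w → ℝ) (c : Fin (v + 1) → ℝ)

theorem controlPart_augmentedField_mulVec :
    controlPart hw ((augmentedField hw h z).mulVec c) = c := by
  funext b
  simp [controlPart, augmentedField, Matrix.mulVec, dotProduct, Fin.val_inj]

theorem statePart_augmentedField_mulVec :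
    statePart hw ((augmentedField hw h z).mulVec c) =
      c (Fin.last v) • h (statePart hw z) (controlPart hw z) := by
  have val_eq_iff (j : Fin (v + 1)) : (j : ℕ) = v ↔ j = Fin.last v := by simp [Fin.ext_iff]
  funext a
  simp [statePart, augmentedField, Matrix.mulVec, dotProduct, val_eq_iff, mul_comm]

variable {g : ℝ → Fin w → ℝ} {g' : Fin w → ℝ} {t : ℝ}

theorem HasDerivAt.statePart (hg : HasDerivAt g g' t) :
    HasDerivAt (fun s => statePart hw (g s)) (statePart hw g') t :=
  hasDerivAt_pi.mpr fun _ => hasDerivAt_pi.mp hg _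

theorem HasDerivAt.controlPart (hg : HasDerivAt g g' t) :
    HasDerivAt (fun s => controlPart hw (g s)) (controlPart hw g') t :=
  hasDerivAt_pi.mpr fun _ => hasDerivAt_pi.mp hg _

end AugmentedField

/-- Neural CDEs subsume alternative ODE models (inclusion direction): with the vector
field `f` built from `h` by placing `h(π z, σ z)` in the last column of the first
`u = w - v - 1` rows and an identity block in the last `v + 1` rows, any solution of
the CDE `z' = f(z) X'` with `σ(z τ) = X τ` records the control in its last `v + 1`
coordinates, `σ(z t) = X t`, and its first `u` coordinates `y = π ∘ z` solve the ODE
`y' = h(y, X)`. -/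
theorem stmt_11 (v w u : ℕ) (hw : u + (v + 1) = w)
    (h : (Fin u → ℝ) → (Fin (v + 1) → ℝ) → (Fin u → ℝ))
    (f : (Fin w → ℝ) → Matrix (Fin w) (Fin (v + 1)) ℝ)
    (hf : ∀ (z : Fin w → ℝ) (i : Fin w) (j : Fin (v + 1)),
      f z i j =
        if hi : (i : ℕ) < u then
          (if (j : ℕ) = v then
            h (fun a : Fin u => z ⟨a.1, lt_of_lt_of_le a.2 (by omega)⟩)
              (fun b : Fin (v + 1) => z ⟨u + b.1, by omega⟩) ⟨i.1, hi⟩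
          else 0)
        else (if (i : ℕ) = u + (j : ℕ) then 1 else 0))
    (τ T : ℝ) (hτT : τ < T)
    (X X' : ℝ → Fin (v + 1) → ℝ)
    (hX : ∀ t ∈ Set.Icc τ T, HasDerivAt X (X' t) t)
    (hlast : ∀ t ∈ Set.Icc τ T, X t (Fin.last v) = t)
    (z : ℝ → Fin w → ℝ)
    (hz0 : ∀ b : Fin (v + 1), z τ ⟨u + b.1, by omega⟩ = X τ b)
    (hz : ∀ t ∈ Set.Icc τ T, HasDerivAt z ((f (z t)).mulVec (X' t)) t) :
    (∀ t ∈ Set.Icc τ T, ∀ b : Fin (v + 1), z t ⟨u + b.1, by omega⟩ = X t b) ∧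
    (∀ t ∈ Set.Icc τ T,
      HasDerivAt (fun s => (fun a : Fin u => z s ⟨a.1, lt_of_lt_of_le a.2 (by omega)⟩))
        (h (fun a : Fin u => z t ⟨a.1, lt_of_lt_of_le a.2 (by omega)⟩) (X t)) t) := by
  obtain rfl : f = augmentedField hw h := funext fun z => Matrix.ext (hf z)
  have hσ : EqOn (fun t => controlPart hw (z t)) X (Icc τ T) := by
    refine eqOn_Icc_of_hasDerivAt_eq (fun t ht => ?_) hX (funext hz0)
    simpa only [controlPart_augmentedField_mulVec] using (hz t ht).controlPart hw
  have hX'_last : ∀ t ∈ Icc τ T, X' t (Fin.last v) = 1 := fun t ht =>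
    (hasDerivAt_pi.mp (hX t ht) (Fin.last v)).eq_of_eqOn_Icc hτT ht (hasDerivAt_id t) hlast
  refine ⟨fun t ht => congrFun (hσ ht), fun t ht => ?_⟩
  have hy := (hz t ht).statePart hw
  rwa [statePart_augmentedField_mulVec, hX'_last t ht, one_smul,
    show controlPart hw (z t) = X t from hσ ht] at hy
end
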